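/- Let G be a finite simple graph with a sum labeling ℓ and label-set M = {ℓ(x) : x ∈ V}, and let v₁, v₂ be distinct equivalent vertices, each having exactly k terminals. Then ℓ(v₁) is among the k smallest labels in M, i.e. |{m ∈ M : m < ℓ(v₁)}| ≤ k − 1. Moreover, if ℓ(v₁) = ℓ(v₂), then ℓ(v₁) is among the k−1 smallest labels in M, i.e. |{m ∈ M : m < ℓ(v₁)}| ≤ k − 2. -/

import Mathlib

/-- A (possibly non-injective) sum labeling of a finite simple graph `G`. -/
def IsSumLabeling {V : Type*} (G : SimpleGraph V) (ℓ : V → ℕ) : Prop :=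
  (∀ v : V, 1 ≤ ℓ v) ∧
  ∀ u v : V, u ≠ v → (G.Adj u v ↔ ∃ w : V, ℓ u + ℓ v = ℓ w)

/-- Two vertices `u`, `v` are equivalent if `N(u) \ {v} = N(v) \ {u}`. -/
def Equiv' {V : Type*} (G : SimpleGraph V) (u v : V) : Prop :=
  G.neighborSet u \ {v} = G.neighborSet v \ {u}

/-!
Fix a vertex `v`. If `u` is adjacent to `v`, some vertex carries the label `ℓ u + ℓ v`; since labels
are bounded, the chain `ℓ u, ℓ u + ℓ v, ℓ u + 2 ℓ v, …` must stop at a terminal of `v`. So every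
label is congruent modulo `ℓ v` to the label of a terminal of `v`. A label `m < ℓ v` is its own
nonzero residue, hence the labels below `ℓ v` inject into the terminals of `v` whose label is not
divisible by `ℓ v`. Among the excluded terminals is `v` itself, and, when `ℓ v₁ = ℓ v₂`, a second
one: `v₂` if it is a terminal, otherwise the end of the chain started at a vertex labelled `2 ℓ v₁`.
-/

namespace IsSumLabeling

variable {V : Type*} [Finite V] {G : SimpleGraph V} {ℓ : V → ℕ}

theorem exists_not_adj_label_eq_add_mul (hℓ : IsSumLabeling G ℓ) (v u : V) :
    ∃ t, ¬ G.Adj v t ∧ ∃ n, ℓ t = ℓ u + n * ℓ v := by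
  obtain ⟨t, ⟨n, hn⟩, hmax⟩ := Set.exists_max_image {t | ∃ n, ℓ t = ℓ u + n * ℓ v} ℓ
    (Set.toFinite _) ⟨u, 0, by simp⟩
  refine ⟨t, fun hadj => ?_, n, hn⟩
  obtain ⟨w, hw⟩ := (hℓ.2 v t hadj.ne).mp hadj
  have hw_le : ℓ w ≤ ℓ t := hmax w ⟨n + 1, by rw [← hw, hn]; ring⟩
  have := hℓ.1 v
  omega

theorem exists_not_adj_mod_eq (hℓ : IsSumLabeling G ℓ) (v : V) {m : ℕ}
    (hm : m ∈ {x ∈ Set.range ℓ | x < ℓ v}) : ∃ t, ¬ G.Adj v t ∧ ℓ t % ℓ v = m := by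
  obtain ⟨⟨u, rfl⟩, hlt⟩ := hm
  obtain ⟨t, ht, n, hn⟩ := hℓ.exists_not_adj_label_eq_add_mul v u
  exact ⟨t, ht, by rw [hn, Nat.add_mul_mod_self_right, Nat.mod_eq_of_lt hlt]⟩

theorem ncard_labels_lt_le_ncard_not_adj_diff (hℓ : IsSumLabeling G ℓ) (v : V) (X : Set V)
    (hX : ∀ t ∈ X, ℓ v ∣ ℓ t) :
    Set.ncard {x ∈ Set.range ℓ | x < ℓ v} ≤ ({w | ¬ G.Adj v w} \ X).ncard := by
  have hsub : {x ∈ Set.range ℓ | x < ℓ v} ⊆ (fun w => ℓ w % ℓ v) '' ({w | ¬ G.Adj v w} \ X) := by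
    intro m hm
    obtain ⟨t, ht, htm⟩ := hℓ.exists_not_adj_mod_eq v hm
    have hm_pos : 0 < m := by
      obtain ⟨⟨u, rfl⟩, -⟩ := hm
      exact hℓ.1 u
    refine ⟨t, ⟨ht, fun htX => ?_⟩, htm⟩
    rw [Nat.mod_eq_zero_of_dvd (hX t htX)] at htm
    omega
  exact (Set.ncard_le_ncard hsub).trans Set.ncard_image_le

theorem exists_not_adj_ne_dvd_of_label_eq (hℓ : IsSumLabeling G ℓ) {v₁ v₂ : V} (hne : v₁ ≠ v₂)
    (heq : ℓ v₁ = ℓ v₂) : ∃ t, ¬ G.Adj v₁ t ∧ t ≠ v₁ ∧ ℓ v₁ ∣ ℓ t := by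
  by_cases hadj : G.Adj v₁ v₂
  · obtain ⟨w, hw⟩ := (hℓ.2 v₁ v₂ hne).mp hadj
    obtain ⟨t, ht, n, hn⟩ := hℓ.exists_not_adj_label_eq_add_mul v₁ w
    have hlt : ℓ v₁ < ℓ t := by
      have := hℓ.1 v₂
      omega
    exact ⟨t, ht, fun h => by simp [h] at hlt, ⟨n + 2, by rw [hn, ← hw, ← heq]; ring⟩⟩
  · exact ⟨v₂, hadj, hne.symm, heq ▸ dvd_rfl⟩

end IsSumLabeling

theorem label_among_smallest_general {V : Type*} [Fintype V]
    (G : SimpleGraph V) (ℓ : V → ℕ) (hℓ : IsSumLabeling G ℓ)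
    (v₁ v₂ : V) (hne : v₁ ≠ v₂) (k : ℕ)
    (ht₁ : Set.ncard {w : V | ¬ G.Adj v₁ w} = k) :
    Set.ncard {x ∈ Set.range ℓ | x < ℓ v₁} ≤ k - 1 ∧
      (ℓ v₁ = ℓ v₂ → Set.ncard {x ∈ Set.range ℓ | x < ℓ v₁} ≤ k - 2) := by
  have hv₁ : v₁ ∈ {w : V | ¬ G.Adj v₁ w} := G.irrefl
  refine ⟨?_, fun heq => ?_⟩
  · have := hℓ.ncard_labels_lt_le_ncard_not_adj_diff v₁ {v₁} (by simp)
    rwa [Set.ncard_sdiff_singleton_of_mem hv₁, ht₁] at this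
  · obtain ⟨t, ht, htv₁, hdvd⟩ := hℓ.exists_not_adj_ne_dvd_of_label_eq hne heq
    have := hℓ.ncard_labels_lt_le_ncard_not_adj_diff v₁ {v₁, t} (by simp [hdvd])
    rwa [Set.ncard_sdiff (Set.insert_subset hv₁ (Set.singleton_subset_iff.mpr ht)),
      Set.ncard_pair htv₁.symm, ht₁] at this

/-- If `v₁`, `v₂` are distinct equivalent vertices, each with exactly `k`
terminals, then `ℓ(v₁)` is among the `k` smallest labels; and if moreover
`ℓ(v₁) = ℓ(v₂)`, it is among the `k - 1` smallest labels. -/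
theorem label_among_smallest {V : Type*} [Fintype V]
    (G : SimpleGraph V) (ℓ : V → ℕ) (hℓ : IsSumLabeling G ℓ)
    (v₁ v₂ : V) (hne : v₁ ≠ v₂) (hequiv : Equiv' G v₁ v₂) (k : ℕ)
    (ht₁ : Set.ncard {w : V | ¬ G.Adj v₁ w} = k)
    (ht₂ : Set.ncard {w : V | ¬ G.Adj v₂ w} = k) :
    Set.ncard {x ∈ Set.range ℓ | x < ℓ v₁} ≤ k - 1 ∧
      (ℓ v₁ = ℓ v₂ → Set.ncard {x ∈ Set.range ℓ | x < ℓ v₁} ≤ k - 2) :=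
  label_among_smallest_general G ℓ hℓ v₁ v₂ hne k ht₁
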